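/- Let V₁ = [[a₁, B₁],[C₁, D₁]] and V₂ = [[a₂, B₂],[C₂, D₂]] be colligations with transfer functions τ_{V₁}(z₁) = a₁ + z₁B₁(I - z₁D₁)^{-1}C₁ and τ_{V₂}(z₂) = a₂ + z₂B₂(I - z₂D₂)^{-1}C₂, where D₁, D₂ are contractions. Then the colligation V = [[a₁a₂, B₁, a₁B₂],[a₂C₁, D₁, C₁B₂],[C₂, 0, D₂]] has two-variable transfer function τ_V(z₁,z₂) = τ_{V₁}(z₁)·τ_{V₂}(z₂) for all (z₁,z₂) ∈ 𝔻². -/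

import Mathlib

open ContinuousLinearMap Metric

section

variable {H₁ H₂ : Type*}
  [NormedAddCommGroup H₁] [InnerProductSpace ℂ H₁] [CompleteSpace H₁]
  [NormedAddCommGroup H₂] [InnerProductSpace ℂ H₂] [CompleteSpace H₂]

/-- One-variable transfer function `τ_V(z) = a + z B (I - z D)^{-1} C` of the colligation
`[[a, B],[C, D]]` on `ℂ ⊕ H`. -/
noncomputable def transfer1 {H : Type*} [NormedAddCommGroup H] [InnerProductSpace ℂ H]
    [CompleteSpace H] (a : ℂ) (B : H →L[ℂ] ℂ) (C : H) (D : H →L[ℂ] H) (z : ℂ) : ℂ :=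
  a + z * B ((Ring.inverse (1 - z • D) : H →L[ℂ] H) C)

/-- `E(z) = z₁ I_{H₁} ⊕ z₂ I_{H₂}`. -/
noncomputable def Eop (z₁ z₂ : ℂ) : (H₁ × H₂) →L[ℂ] H₁ × H₂ :=
  (z₁ • ContinuousLinearMap.fst ℂ H₁ H₂).prod (z₂ • ContinuousLinearMap.snd ℂ H₁ H₂)

/-- The block operator `[[D₁, D₂],[0, D₃]]` on `H₁ ⊕ H₂`. -/
noncomputable def Dop (D₁ : H₁ →L[ℂ] H₁) (D₂ : H₂ →L[ℂ] H₁) (D₃ : H₂ →L[ℂ] H₂) :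
    (H₁ × H₂) →L[ℂ] H₁ × H₂ :=
  (D₁.coprod D₂).prod ((0 : H₁ →L[ℂ] H₂).coprod D₃)

/-- Two-variable transfer function `τ_V(z) = a + B (I - E(z)D)^{-1} E(z) C`. -/
noncomputable def transfer2 (a : ℂ) (B₁ : H₁ →L[ℂ] ℂ) (B₂ : H₂ →L[ℂ] ℂ)
    (C₁ : H₁) (C₂ : H₂) (D₁ : H₁ →L[ℂ] H₁) (D₂ : H₂ →L[ℂ] H₁) (D₃ : H₂ →L[ℂ] H₂)
    (z₁ z₂ : ℂ) : ℂ :=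
  a + (B₁.coprod B₂)
    ((Ring.inverse (1 - (Eop z₁ z₂) * (Dop D₁ D₂ D₃)) :
        (H₁ × H₂) →L[ℂ] H₁ × H₂) ((Eop z₁ z₂) (C₁, C₂)))

end

/-! In the decomposition `H₁ ⊕ H₂`, the operator `1 - E(z)D` is block upper triangular with
diagonal blocks `1 - zᵢDᵢ`, which are invertible by the Neumann series since `‖zᵢDᵢ‖ < 1`.
Writing `Rᵢ = (1 - zᵢDᵢ)⁻¹`, its inverse is block upper triangular with off-diagonal block
`z₁ R₁ C₁ B₂ R₂`, so `τ_V(z)` expands to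
`a₁a₂ + a₂ z₁ B₁R₁C₁ + a₁ z₂ B₂R₂C₂ + z₁z₂ (B₁R₁C₁)(B₂R₂C₂) = τ_{V₁}(z₁) τ_{V₂}(z₂)`. -/

open scoped Ring

lemma isUnit_one_sub_smul {𝕜 A : Type*} [NormedField 𝕜] [NormedRing A] [NormedSpace 𝕜 A]
    [CompleteSpace A] {z : 𝕜} {D : A} (hz : ‖z‖ < 1) (hD : ‖D‖ ≤ 1) : IsUnit (1 - z • D) :=
  isUnit_one_sub_of_norm_lt_one <| calc
    ‖z • D‖ ≤ ‖z‖ * ‖D‖ := norm_smul_le z D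
    _ ≤ ‖z‖ * 1 := by gcongr
    _ < 1 := by rwa [mul_one]

section

variable {H₁ H₂ : Type*}
  [NormedAddCommGroup H₁] [InnerProductSpace ℂ H₁]
  [NormedAddCommGroup H₂] [InnerProductSpace ℂ H₂]

@[simp]
lemma Eop_apply (z₁ z₂ : ℂ) (x : H₁ × H₂) : Eop z₁ z₂ x = (z₁ • x.1, z₂ • x.2) := by
  simp [Eop]

@[simp]
lemma Dop_apply (D₁ : H₁ →L[ℂ] H₁) (D₂ : H₂ →L[ℂ] H₁) (D₃ : H₂ →L[ℂ] H₂) (x : H₁ × H₂) :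
    Dop D₁ D₂ D₃ x = (D₁ x.1 + D₂ x.2, D₃ x.2) := by
  simp [Dop]

lemma Dop_comp (D₁ D₁' : H₁ →L[ℂ] H₁) (D₂ D₂' : H₂ →L[ℂ] H₁) (D₃ D₃' : H₂ →L[ℂ] H₂) :
    Dop D₁ D₂ D₃ ∘L Dop D₁' D₂' D₃' = Dop (D₁ ∘L D₁') (D₁ ∘L D₂' + D₂ ∘L D₃') (D₃ ∘L D₃') := by
  ext x <;> simp

lemma Dop_id_zero_id : Dop (.id ℂ H₁) 0 (.id ℂ H₂) = .id ℂ (H₁ × H₂) := by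
  ext x <;> simp

lemma one_sub_Eop_mul_Dop (z₁ z₂ : ℂ) (D₁ : H₁ →L[ℂ] H₁) (D₂ : H₂ →L[ℂ] H₁)
    (D₃ : H₂ →L[ℂ] H₂) :
    1 - Eop z₁ z₂ * Dop D₁ D₂ D₃ = Dop (1 - z₁ • D₁) (-(z₁ • D₂)) (1 - z₂ • D₃) := by
  ext x <;> simp [sub_eq_add_neg]

lemma inverse_Dop {D₁ : H₁ →L[ℂ] H₁} {D₃ : H₂ →L[ℂ] H₂} (h₁ : IsUnit D₁) (h₃ : IsUnit D₃)
    (D₂ : H₂ →L[ℂ] H₁) :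
    (Dop D₁ D₂ D₃)⁻¹ʳ = Dop D₁⁻¹ʳ (-(D₁⁻¹ʳ ∘L D₂ ∘L D₃⁻¹ʳ)) D₃⁻¹ʳ := by
  have r₁ : D₁ ∘L D₁⁻¹ʳ = .id ℂ H₁ := Ring.mul_inverse_cancel _ h₁
  have l₁ : D₁⁻¹ʳ ∘L D₁ = .id ℂ H₁ := Ring.inverse_mul_cancel _ h₁
  have r₃ : D₃ ∘L D₃⁻¹ʳ = .id ℂ H₂ := Ring.mul_inverse_cancel _ h₃
  have l₃ : D₃⁻¹ʳ ∘L D₃ = .id ℂ H₂ := Ring.inverse_mul_cancel _ h₃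
  have right : Dop D₁ D₂ D₃ ∘L Dop D₁⁻¹ʳ (-(D₁⁻¹ʳ ∘L D₂ ∘L D₃⁻¹ʳ)) D₃⁻¹ʳ = .id ℂ _ := by
    rw [Dop_comp, comp_neg, ← comp_assoc, r₁, r₃, id_comp, neg_add_cancel, Dop_id_zero_id]
  have left : Dop D₁⁻¹ʳ (-(D₁⁻¹ʳ ∘L D₂ ∘L D₃⁻¹ʳ)) D₃⁻¹ʳ ∘L Dop D₁ D₂ D₃ = .id ℂ _ := by
    rw [Dop_comp, neg_comp, comp_assoc, comp_assoc, l₁, l₃, comp_id, add_neg_cancel,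
      Dop_id_zero_id]
  exact Ring.inverse_unit ⟨_, _, right, left⟩

end

section

variable {H₁ H₂ : Type*}
  [NormedAddCommGroup H₁] [InnerProductSpace ℂ H₁] [CompleteSpace H₁]
  [NormedAddCommGroup H₂] [InnerProductSpace ℂ H₂] [CompleteSpace H₂]

/-- If `V₁ = [[a₁, B₁],[C₁, D₁]]` and `V₂ = [[a₂, B₂],[C₂, D₂]]` are
colligations with contractive `D₁, D₂`, then the colligation
`V = [[a₁a₂, B₁, a₁B₂],[a₂C₁, D₁, C₁B₂],[C₂, 0, D₂]]` satisfies
`τ_V(z₁,z₂) = τ_{V₁}(z₁) · τ_{V₂}(z₂)` for all `(z₁,z₂) ∈ 𝔻²`. -/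
theorem stmt_16 (a₁ a₂ : ℂ) (B₁ : H₁ →L[ℂ] ℂ) (B₂ : H₂ →L[ℂ] ℂ) (C₁ : H₁) (C₂ : H₂)
    (D₁ : H₁ →L[ℂ] H₁) (D₂ : H₂ →L[ℂ] H₂)
    (hD₁ : ‖D₁‖ ≤ 1) (hD₂ : ‖D₂‖ ≤ 1) :
    ∀ z₁ ∈ ball (0 : ℂ) 1, ∀ z₂ ∈ ball (0 : ℂ) 1,
      transfer2 (a₁ * a₂) B₁ (a₁ • B₂) (a₂ • C₁) C₂ D₁ (B₂.smulRight C₁) D₂ z₁ z₂ =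
        transfer1 a₁ B₁ C₁ D₁ z₁ * transfer1 a₂ B₂ C₂ D₂ z₂ := by
  intro z₁ hz₁ z₂ hz₂
  rw [mem_ball_zero_iff] at hz₁ hz₂
  rw [transfer2, one_sub_Eop_mul_Dop,
    inverse_Dop (isUnit_one_sub_smul hz₁ hD₁) (isUnit_one_sub_smul hz₂ hD₂), transfer1, transfer1]
  simp only [Eop_apply, Dop_apply, coprod_apply, neg_apply, comp_apply, smul_apply,
    smulRight_apply, map_neg, map_add, map_smul, smul_eq_mul]
  ring

end
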